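/- In the MAJSAT gadget built from a Boolean function φ on n ≥ 1 variables, there exists a stochastically decisive coordinate set I with |I| ≤ 0 if and only if at least half of all assignments satisfy φ, i.e., 2·|{s ∈ S : φ(s) = true}| ≥ 2^n. -/

import Mathlib

/-- Full-information optimizer: actions maximizing pointwise utility at state `s`. -/
def Opt {n : ℕ} {A : Type*} {X : Fin n → Type*}
    (U : A → (∀ i, X i) → ℝ) (s : ∀ i, X i) : Set A :=
  {a | ∀ b, U b s ≤ U a s}

/-- Conditional (unnormalized) expected utility of action `a` over the `I`-fiber of `s`. -/
noncomputable def condEU {n : ℕ} {A : Type*} {X : Fin n → Type*}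
    [∀ i, Fintype (X i)] [∀ i, DecidableEq (X i)]
    (U : A → (∀ i, X i) → ℝ) (P : (∀ i, X i) → ℝ)
    (I : Finset (Fin n)) (s : ∀ i, X i) (a : A) : ℝ :=
  ∑ t ∈ Finset.univ.filter (fun t : ∀ i, X i => ∀ i ∈ I, t i = s i), P t * U a t

/-- Conditional optimizer: actions maximizing conditional expected utility on the `I`-fiber. -/
noncomputable def OptS {n : ℕ} {A : Type*} {X : Fin n → Type*}
    [∀ i, Fintype (X i)] [∀ i, DecidableEq (X i)]
    (U : A → (∀ i, X i) → ℝ) (P : (∀ i, X i) → ℝ)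
    (I : Finset (Fin n)) (s : ∀ i, X i) : Set A :=
  {a | ∀ b, condEU U P I s b ≤ condEU U P I s a}

/-- `I` is statically sufficient: states agreeing on `I` have the same optimizer. -/
def StaticSufficient {n : ℕ} {A : Type*} {X : Fin n → Type*}
    (U : A → (∀ i, X i) → ℝ) (I : Finset (Fin n)) : Prop :=
  ∀ s t : ∀ i, X i, (∀ i ∈ I, s i = t i) → Opt U s = Opt U t

/-- `I` is stochastically sufficient: the conditional optimizer agrees with the
full-information optimizer at every state. -/
def StochSufficient {n : ℕ} {A : Type*} {X : Fin n → Type*}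
    [∀ i, Fintype (X i)] [∀ i, DecidableEq (X i)]
    (U : A → (∀ i, X i) → ℝ) (P : (∀ i, X i) → ℝ) (I : Finset (Fin n)) : Prop :=
  ∀ s : ∀ i, X i, OptS U P I s = Opt U s

/-- `I` is stochastically decisive: every positive-probability state's observed fiber
has a unique conditional optimal action. -/
def StochDecisive {n : ℕ} {A : Type*} {X : Fin n → Type*}
    [∀ i, Fintype (X i)] [∀ i, DecidableEq (X i)]
    (U : A → (∀ i, X i) → ℝ) (P : (∀ i, X i) → ℝ) (I : Finset (Fin n)) : Prop :=
  ∀ s : ∀ i, X i, 0 < P s → ∃ a : A, OptS U P I s = {a}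


/-- The three actions of the MAJSAT gadget. -/
inductive GAct : Type
  | accept : GAct
  | holdL : GAct
  | holdR : GAct
deriving DecidableEq

instance : Fintype GAct where
  elems := {GAct.accept, GAct.holdL, GAct.holdR}
  complete := fun x => by cases x <;> simp

/-- Gadget utility: `accept` pays `1` on satisfying assignments and `0` otherwise;
both hold actions pay the constant `1/2 - 2^{-(n+1)}`. -/
noncomputable def gU (n : ℕ) (φ : (Fin n → Bool) → Bool) :
    GAct → (∀ _ : Fin n, Bool) → ℝ
  | GAct.accept, s => if φ s then 1 else 0
  | GAct.holdL, _ => 1 / 2 - 1 / 2 ^ (n + 1)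
  | GAct.holdR, _ => 1 / 2 - 1 / 2 ^ (n + 1)

/-- Uniform distribution on the Boolean cube. -/
noncomputable def gP (n : ℕ) : (∀ _ : Fin n, Bool) → ℝ := fun _ => 1 / 2 ^ n

/-! With nothing observed, every conditional expected utility is a global average: `accept` is
worth the fraction `k / 2^n` of satisfying assignments and both holds are worth
`1/2 - 2^{-(n+1)}`. The two holds tie, so a unique optimum exists exactly when `accept` strictly
beats them, which for an integer `k` means `2^n ≤ 2k`. -/

open Finset

theorem setOf_forall_le_eq_singleton_iff {A α : Type*} [PartialOrder α] (f : A → α) (a : A) :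
    {x | ∀ b, f b ≤ f x} = {a} ↔ ∀ b ≠ a, f b < f a := by
  simp only [Set.eq_singleton_iff_unique_mem, Set.mem_ofPred_eq]
  constructor
  · rintro ⟨hmax, huniq⟩ b hb
    exact (hmax b).lt_of_ne fun hba => hb (huniq b fun c => hba ▸ hmax c)
  · intro h
    refine ⟨fun b => ?_, fun x hx => by_contra fun hxa => (h x hxa).not_ge (hx a)⟩
    by_cases hb : b = a
    · exact hb ▸ le_rfl
    · exact (h b hb).le

theorem condEU_empty {n : ℕ} {A : Type*} {X : Fin n → Type*}
    [∀ i, Fintype (X i)] [∀ i, DecidableEq (X i)]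
    (U : A → (∀ i, X i) → ℝ) (P : (∀ i, X i) → ℝ) (s : ∀ i, X i) (a : A) :
    condEU U P ∅ s a = ∑ t, P t * U a t := by
  simp [condEU]

namespace GAct

theorem exists_forall_ne_lt_iff_of_holdL_eq_holdR {α : Type*} [Preorder α] (f : GAct → α)
    (h : f holdL = f holdR) :
    (∃ a, ∀ b ≠ a, f b < f a) ↔ f holdL < f accept := by
  constructor
  · rintro ⟨a, ha⟩
    cases a with
    | accept => exact ha holdL (by decide)
    | holdL => exact absurd (h ▸ ha holdR (by decide)) (lt_irrefl _)
    | holdR => exact absurd (h ▸ ha holdL (by decide)) (lt_irrefl _)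
  · intro hlt
    refine ⟨accept, fun b hb => ?_⟩
    cases b with
    | accept => exact absurd rfl hb
    | holdL => exact hlt
    | holdR => exact h ▸ hlt

end GAct

theorem sum_gP (n : ℕ) : ∑ t, gP n t = 1 := by
  simp [gP]

theorem condEU_gadget_accept (n : ℕ) (φ : (Fin n → Bool) → Bool) (s : Fin n → Bool) :
    condEU (X := fun _ : Fin n => Bool) (gU n φ) (gP n) ∅ s GAct.accept =
      #{t | φ t = true} / 2 ^ n := by
  simp [condEU_empty, gP, gU, Finset.sum_ite, div_eq_mul_inv]

theorem condEU_gadget_of_ne_accept (n : ℕ) (φ : (Fin n → Bool) → Bool) (s : Fin n → Bool)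
    {a : GAct} (ha : a ≠ GAct.accept) :
    condEU (X := fun _ : Fin n => Bool) (gU n φ) (gP n) ∅ s a = 1 / 2 - 1 / 2 ^ (n + 1) := by
  cases a <;> simp_all [condEU_empty, gU, ← Finset.sum_mul, sum_gP]

theorem one_half_sub_lt_div_two_pow_iff (n k : ℕ) :
    (1 : ℝ) / 2 - 1 / 2 ^ (n + 1) < k / 2 ^ n ↔ 2 ^ n ≤ 2 * k := by
  have hpos : (0 : ℝ) < 2 ^ (n + 1) := by positivity
  have : (1 : ℝ) / 2 - 1 / 2 ^ (n + 1) < k / 2 ^ n ↔ ((2 ^ n : ℕ) : ℝ) < 2 * k + 1 := by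
    rw [← mul_lt_mul_iff_left₀ hpos, pow_succ]
    field_simp
    push_cast
    constructor <;> intro h <;> linarith
  rw [this]
  norm_cast
  omega

theorem gadget_stochDecisive_empty_iff (n : ℕ) (φ : (Fin n → Bool) → Bool) :
    StochDecisive (X := fun _ : Fin n => Bool) (gU n φ) (gP n) ∅ ↔
      (1 : ℝ) / 2 - 1 / 2 ^ (n + 1) < #{s | φ s = true} / 2 ^ n := by
  have hP : ∀ s, 0 < gP n s := fun _ => by unfold gP; positivity
  have hhold : ∀ s, condEU (X := fun _ : Fin n => Bool) (gU n φ) (gP n) ∅ s GAct.holdL =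
      condEU (X := fun _ : Fin n => Bool) (gU n φ) (gP n) ∅ s GAct.holdR := fun s => by
    rw [condEU_gadget_of_ne_accept n φ s (by decide), condEU_gadget_of_ne_accept n φ s (by decide)]
  simp only [StochDecisive, OptS, setOf_forall_le_eq_singleton_iff, hP,
    fun s => GAct.exists_forall_ne_lt_iff_of_holdL_eq_holdR _ (hhold s),
    condEU_gadget_accept, condEU_gadget_of_ne_accept n φ _ (a := GAct.holdL) (by decide),
    forall_const]

theorem majsat_gadget_minimum_decisive_set_general
    (n : ℕ) (φ : (Fin n → Bool) → Bool) :
    (∃ I : Finset (Fin n), I.card ≤ 0 ∧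
        StochDecisive (X := fun _ : Fin n => Bool) (gU n φ) (gP n) I) ↔
      2 ^ n ≤ 2 * (Finset.univ.filter fun s : Fin n → Bool => φ s = true).card := by
  simp only [Nat.le_zero, Finset.card_eq_zero, exists_eq_left]
  rw [gadget_stochDecisive_empty_iff, one_half_sub_lt_div_two_pow_iff]

theorem majsat_gadget_minimum_decisive_set
    (n : ℕ) (hn : 1 ≤ n) (φ : (Fin n → Bool) → Bool) :
    (∃ I : Finset (Fin n), I.card ≤ 0 ∧
        StochDecisive (X := fun _ : Fin n => Bool) (gU n φ) (gP n) I) ↔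
      2 ^ n ≤ 2 * (Finset.univ.filter fun s : Fin n → Bool => φ s = true).card :=
  majsat_gadget_minimum_decisive_set_general n φ
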